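/- Let m, n be positive integers, B an m×n real matrix with full column rank, Q ∈ ℝ^m, P* = (BᵀB)⁻¹BᵀQ, r* = BP* − Q, and MSEuw = (1/m)∑_{i=1}^m (r*_i)². Assume the entries of r* do not all have the same absolute value. Then there exist δ > 0, a neighborhood U of the point (P*, 0, (1/m, …, 1/m)) in ℝⁿ × ℝ × ℝ^m, and continuously differentiable functions E ↦ (P(E), μ(E), w(E)) defined on the interval (MSEuw − δ, MSEuw] with values in U, such that F(P(E), μ(E), w(E); E) = 0 for every E in the interval, (P(MSEuw), μ(MSEuw), w(MSEuw)) = (P*, 0, (1/m, …, 1/m)), and for each such E the triple (P(E), μ(E), w(E)) is the unique zero of F(·, ·, ·; E) in U. -/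

import Mathlib

/-!
At `μ = 0` all weights `e^{-μ r_i²}` equal one, so the normal equations `Bᵀ r* = 0` make
`(P*, 0, (1/m, …, 1/m))` a zero of `F(·; MSEuw)`. There the Jacobian in `(P, μ, w)` is block
triangular: the `μ`-entry of `F2` is `MSEuw ∑ r*_i² - ∑ r*_i⁴ = -∑ (r*_i² - MSEuw)²`, which vanishes
only if all `|r*_i|` coincide; once `dμ = 0`, `F3` forces `dw = 0` and `F1` reduces to
`(1/m) BᵀB dP`. The implicit function theorem then gives the `C¹` branch `E ↦ (P, μ, w)(E)` and
its local uniqueness.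
-/

open Matrix Finset

/-- The map `F(P, μ, w; E) = (F1, F2, F3)` of the maximum-entropy weighted
least-squares system, with residual `r = BP − Q`:
`F1 = Bᵀ diag(w) r`, `F2 = ∑ i, e^{−μ r_i²} r_i² − E ∑ i, e^{−μ r_i²}`,
`F3_k = w_k − e^{−μ r_k²}/∑ i, e^{−μ r_i²}`. -/
noncomputable def Fmap (m n : ℕ) (B : Matrix (Fin m) (Fin n) ℝ) (Q : Fin m → ℝ)
    (E : ℝ) (P : Fin n → ℝ) (μ : ℝ) (w : Fin m → ℝ) :
    (Fin n → ℝ) × ℝ × (Fin m → ℝ) :=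
  let r := B.mulVec P - Q
  (Bᵀ.mulVec ((Matrix.diagonal w).mulVec r),
   ∑ i : Fin m, Real.exp (-μ * (r i) ^ 2) * (r i) ^ 2
     - E * ∑ i : Fin m, Real.exp (-μ * (r i) ^ 2),
   fun k => w k - Real.exp (-μ * (r k) ^ 2) / ∑ i : Fin m, Real.exp (-μ * (r i) ^ 2))

open Topology
open scoped ContDiff

section

variable {𝕜 E₁ E₂ F : Type*} [NontriviallyNormedField 𝕜]
  [NormedAddCommGroup E₁] [NormedSpace 𝕜 E₁] [NormedAddCommGroup E₂] [NormedSpace 𝕜 E₂]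
  [NormedAddCommGroup F] [NormedSpace 𝕜 F] {f : E₁ × E₂ → F} {u : E₁ × E₂}

theorem DifferentiableAt.fderiv_comp_inr {f₂' : E₂ →L[𝕜] F} (hf : DifferentiableAt 𝕜 f u)
    (h : HasFDerivAt (fun y => f (u.1, y)) f₂' u.2) : fderiv 𝕜 f u ∘L .inr 𝕜 E₁ E₂ = f₂' :=
  (hf.hasFDerivAt.comp u.2 (hasFDerivAt_prodMk_right u.1 u.2)).unique h

theorem ContinuousLinearMap.isInvertible_of_injective [CompleteSpace 𝕜] [FiniteDimensional 𝕜 E₁]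
    {L : E₁ →L[𝕜] E₁} (hL : Function.Injective L) : L.IsInvertible :=
  ⟨(LinearEquiv.ofInjectiveEndo L.toLinearMap hL).toContinuousLinearEquiv, rfl⟩

end

section

variable {𝕜 E₁ E₂ F : Type*} [RCLike 𝕜]
  [NormedAddCommGroup E₁] [NormedSpace 𝕜 E₁] [CompleteSpace E₁]
  [NormedAddCommGroup E₂] [NormedSpace 𝕜 E₂] [CompleteSpace E₂]
  [NormedAddCommGroup F] [NormedSpace 𝕜 F] [CompleteSpace F]
  {f : E₁ × E₂ → F} {u : E₁ × E₂} {n : ℕ∞ω}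

theorem ContDiffAt.exists_mem_nhds_implicitFunction (cdf : ContDiffAt 𝕜 n f u) (pn : n ≠ 0)
    (hn : n ≠ ∞) (if₂ : (fderiv 𝕜 f u ∘L .inr 𝕜 E₁ E₂).IsInvertible) :
    ∃ V ∈ 𝓝 u.1, ∃ U ∈ 𝓝 u.2, ∀ x ∈ V,
      ContDiffAt 𝕜 n (cdf.implicitFunction pn if₂) x ∧ cdf.implicitFunction pn if₂ x ∈ U ∧
      f (x, cdf.implicitFunction pn if₂ x) = f u ∧
      ∀ y ∈ U, f (x, y) = f u → y = cdf.implicitFunction pn if₂ x := by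
  set ψ := cdf.implicitFunction pn if₂
  obtain ⟨V₀, hV₀, U, hU, hVU⟩ :=
    mem_nhds_prod_iff.mp (cdf.eventually_apply_eq_iff_implicitFunction pn if₂)
  have hψ := cdf.contDiffAt_implicitFunction pn if₂
  have hψU : ∀ᶠ x in 𝓝 u.1, ψ x ∈ U :=
    hψ.continuousAt.preimage_mem_nhds (by rwa [cdf.implicitFunction_apply_self])
  refine ⟨_, (show ∀ᶠ x in 𝓝 u.1, x ∈ V₀ from hV₀).and ((hψ.eventually hn).and (hψU.and
    (cdf.eventually_apply_implicitFunction pn if₂))), U, hU, ?_⟩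
  rintro x ⟨hx, hcd, hxU, hfx⟩
  exact ⟨hcd, hxU, hfx, fun y hy hfy => ((hVU ⟨hx, hy⟩).mp hfy).symm⟩

end

theorem Matrix.diagonal_mulVec_eq_mul {ι R : Type*} [Fintype ι] [DecidableEq ι] [CommSemiring R]
    (v w : ι → R) : diagonal v *ᵥ w = v * w :=
  funext (mulVec_diagonal v w)

@[fun_prop]
theorem ContDiff.matrix_mulVec {ι κ X : Type*} [Fintype ι] [Fintype κ] [NormedAddCommGroup X]
    [NormedSpace ℝ X] {k : ℕ∞ω} (A : Matrix ι κ ℝ) {f : X → κ → ℝ} (hf : ContDiff ℝ k f) :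
    ContDiff ℝ k fun x => A *ᵥ f x :=
  A.mulVecLin.toContinuousLinearMap.contDiff.comp hf

theorem transpose_mulVec_leastSquares_residual {m n : ℕ} (B : Matrix (Fin m) (Fin n) ℝ)
    (hB : IsUnit (Bᵀ * B).det) (Q : Fin m → ℝ) :
    Bᵀ *ᵥ (B *ᵥ (((Bᵀ * B)⁻¹ * Bᵀ) *ᵥ Q) - Q) = 0 := by
  rw [mulVec_sub, mulVec_mulVec, mulVec_mulVec, ← Matrix.mul_assoc, Matrix.mul_nonsing_inv _ hB,
    Matrix.one_mul, sub_self]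

theorem mean_mul_sum_sq_lt_sum_pow_four {m : ℕ} {r : Fin m → ℝ}
    (hr : ¬ ∀ i j, |r i| = |r j|) :
    (1 / (m : ℝ) * ∑ i, r i ^ 2) * ∑ i, r i ^ 2 < ∑ i, r i ^ 4 := by
  obtain ⟨i, j, hij⟩ : ∃ i j, |r i| ≠ |r j| := by simpa using hr
  have hm : (m : ℝ) ≠ 0 := Nat.cast_ne_zero.mpr i.pos.ne'
  set M := 1 / (m : ℝ) * ∑ i, r i ^ 2
  have hvar : ∑ i, r i ^ 4 - M * ∑ i, r i ^ 2 = ∑ i, (r i ^ 2 - M) ^ 2 := by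
    have hsum : ∑ i, r i ^ 2 = m * M := by simp only [M]; field_simp
    simp only [sub_sq, sum_add_distrib, sum_sub_distrib, ← sum_mul, ← mul_sum, sum_const, card_univ,
      Fintype.card_fin, nsmul_eq_mul, ← pow_mul]
    rw [hsum]; ring
  obtain ⟨k, hk⟩ : ∃ k, r k ^ 2 ≠ M := by
    by_contra! h
    exact hij ((sq_eq_sq_iff_abs_eq_abs _ _).mp ((h i).trans (h j).symm))
  have : 0 < ∑ i, (r i ^ 2 - M) ^ 2 :=
    sum_pos' (fun i _ => sq_nonneg _) ⟨k, mem_univ k, by positivity⟩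
  linarith

namespace MaxEnt

abbrev Unknowns (m n : ℕ) : Type := (Fin n → ℝ) × ℝ × (Fin m → ℝ)

variable {m n : ℕ} (B : Matrix (Fin m) (Fin n) ℝ) (Q : Fin m → ℝ)

theorem Fmap_eq (E : ℝ) (P : Fin n → ℝ) (μ : ℝ) (w : Fin m → ℝ) :
    Fmap m n B Q E P μ w =
      (Bᵀ *ᵥ (w * (B *ᵥ P - Q)),
        ∑ i, Real.exp (-μ * (B *ᵥ P - Q) i ^ 2) * (B *ᵥ P - Q) i ^ 2
          - E * ∑ i, Real.exp (-μ * (B *ᵥ P - Q) i ^ 2),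
        w - fun k =>
          Real.exp (-μ * (B *ᵥ P - Q) k ^ 2) / ∑ i, Real.exp (-μ * (B *ᵥ P - Q) i ^ 2)) := by
  simp only [Fmap, diagonal_mulVec_eq_mul]
  rfl

theorem contDiff_Fmap {k : ℕ∞ω} (hm : m ≠ 0) :
    ContDiff ℝ k fun q : ℝ × Unknowns m n => Fmap m n B Q q.1 q.2.1 q.2.2.1 q.2.2.2 := by
  have : Nonempty (Fin m) := ⟨⟨0, Nat.pos_of_ne_zero hm⟩⟩
  simp only [Fmap_eq]
  fun_prop (disch := exact fun q => (Finset.sum_pos (fun i _ => Real.exp_pos _) univ_nonempty).ne')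

theorem Fmap_eq_zero_of_transpose_mulVec_eq_zero (hm : m ≠ 0) {P : Fin n → ℝ}
    (hP : Bᵀ *ᵥ (B *ᵥ P - Q) = 0) :
    Fmap m n B Q (1 / m * ∑ i, (B *ᵥ P - Q) i ^ 2) P 0 (fun _ => 1 / m) = 0 := by
  rw [Fmap_eq]
  refine Prod.ext ?_ (Prod.ext ?_ ?_)
  · change Bᵀ *ᵥ ((1 / (m : ℝ)) • (B *ᵥ P - Q)) = 0
    rw [mulVec_smul, hP, smul_zero]
  · simp [field]
  · ext k
    simp

noncomputable def jacobianAtZero (r w : Fin m → ℝ) (E : ℝ) :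
    Unknowns m n →L[ℝ] Unknowns m n :=
  LinearMap.toContinuousLinearMap
    { toFun := fun v => (Bᵀ *ᵥ (w * (B *ᵥ v.1) + r * v.2.2),
        2 * (r ⬝ᵥ (B *ᵥ v.1)) + (E * ∑ i, r i ^ 2 - ∑ i, r i ^ 4) * v.2.1,
        v.2.2 + v.2.1 • fun k => r k ^ 2 / m - (∑ i, r i ^ 2) / m ^ 2)
      map_add' := fun v v' => by
        ext <;> simp [mulVec_add, dotProduct_add, mul_add, add_mul] <;> ring
      map_smul' := fun c v => by
        ext <;> simp [mulVec_smul, mul_add, ← smul_add] <;> ring }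

theorem hasFDerivAt_Fmap_of_mu_eq_zero (hm : m ≠ 0) (E : ℝ) (P : Fin n → ℝ) (w : Fin m → ℝ) :
    HasFDerivAt (fun x : Unknowns m n => Fmap m n B Q E x.1 x.2.1 x.2.2)
      (jacobianAtZero B (B *ᵥ P - Q) w E) (P, 0, w) := by
  set x₀ : Unknowns m n := (P, 0, w)
  have hR : HasFDerivAt (fun x : Unknowns m n => B *ᵥ x.1 - Q)
      (B.mulVecLin.toContinuousLinearMap ∘L .fst ℝ _ _) x₀ :=
    ((B.mulVecLin.toContinuousLinearMap ∘L .fst ℝ _ _).hasFDerivAt (x := x₀)).sub_const Q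
  have hRi := hasFDerivAt_pi'.mp hR
  have hμ : HasFDerivAt (fun x : Unknowns m n => x.2.1) (.fst ℝ _ _ ∘L .snd ℝ _ _) x₀ :=
    hasFDerivAt_snd.fst
  have hw : HasFDerivAt (fun x : Unknowns m n => x.2.2) (.snd ℝ _ _ ∘L .snd ℝ _ _) x₀ :=
    hasFDerivAt_snd.snd
  have hexp := fun i => (hμ.fun_neg.fun_mul ((hRi i).pow 2)).exp
  have hS := HasFDerivAt.fun_sum (u := univ) fun i _ => hexp i
  have hS₀ : ∑ i, Real.exp (-x₀.2.1 * (B *ᵥ x₀.1 - Q) i ^ 2) = m := by simp [x₀]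
  have hinv := (hasDerivAt_inv (by rw [hS₀]; exact_mod_cast hm)).comp_hasFDerivAt x₀ hS
  simp only [Fmap_eq]
  refine (((Bᵀ.mulVecLin.toContinuousLinearMap).hasFDerivAt.comp x₀ (hw.fun_mul hR)).prodMk
    (((HasFDerivAt.fun_sum (u := univ) fun i _ => (hexp i).fun_mul ((hRi i).pow 2)).sub
      (hS.const_mul E)).prodMk
    (hw.sub (hasFDerivAt_pi.mpr fun k => (hexp k).fun_mul hinv)))).congr_fderiv ?_
  ext v <;> simp [x₀, jacobianAtZero, mulVec_transpose, dotProduct, ← mul_sum, ← pow_add,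
    mul_assoc] <;> ring

theorem jacobianAtZero_injective (hm : m ≠ 0) (hB : IsUnit (Bᵀ * B).det) {r : Fin m → ℝ}
    (hr : Bᵀ *ᵥ r = 0) {E : ℝ} (hc : E * ∑ i, r i ^ 2 - ∑ i, r i ^ 4 ≠ 0) :
    Function.Injective (jacobianAtZero B r (fun _ => 1 / (m : ℝ)) E) := by
  rw [injective_iff_map_eq_zero]
  rintro ⟨dP, dμ, dw⟩ hv
  simp only [jacobianAtZero, LinearMap.coe_toContinuousLinearMap', LinearMap.coe_mk,
    AddHom.coe_mk, Prod.mk_eq_zero] at hv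
  obtain ⟨h₁, h₂, h₃⟩ := hv
  have hdμ : dμ = 0 := by
    rw [dotProduct_mulVec, ← mulVec_transpose, hr, zero_dotProduct, mul_zero, zero_add] at h₂
    exact (mul_eq_zero.mp h₂).resolve_left hc
  have hdw : dw = 0 := by simpa [hdμ] using h₃
  have hdP : dP = 0 := by
    have h : (Bᵀ * B) *ᵥ dP = 0 := by
      have hconst : (fun _ => 1 / (m : ℝ)) * (B *ᵥ dP) = (1 / (m : ℝ)) • (B *ᵥ dP) := rfl
      rw [hdw, mul_zero, add_zero, hconst, mulVec_smul, smul_eq_zero, mulVec_mulVec] at h₁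
      exact h₁.resolve_left (by simpa using hm)
    exact mulVec_injective_of_isUnit ((isUnit_iff_isUnit_det _).mpr hB)
      (h.trans (mulVec_zero _).symm)
  simp [hdP, hdμ, hdw]

end MaxEnt

theorem stmt_0_general (m n : ℕ) (hm : 0 < m)
    (B : Matrix (Fin m) (Fin n) ℝ) (Q : Fin m → ℝ)
    (hB : IsUnit (Bᵀ * B).det)
    (Pstar : Fin n → ℝ) (hP : Pstar = ((Bᵀ * B)⁻¹ * Bᵀ).mulVec Q)
    (rstar : Fin m → ℝ) (hr : rstar = B.mulVec Pstar - Q)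
    (MSEuw : ℝ) (hM : MSEuw = (1 / (m : ℝ)) * ∑ i : Fin m, (rstar i) ^ 2)
    (hres : ¬ ∀ i j : Fin m, |rstar i| = |rstar j|) :
    ∃ δ > (0 : ℝ),
      ∃ U ∈ nhds ((Pstar, 0, fun _ => 1 / (m : ℝ)) :
          (Fin n → ℝ) × ℝ × (Fin m → ℝ)),
        ∃ (Pf : ℝ → Fin n → ℝ) (μf : ℝ → ℝ) (wf : ℝ → Fin m → ℝ),
          ContDiffOn ℝ 1 (fun E => (Pf E, μf E, wf E)) (Set.Ioc (MSEuw - δ) MSEuw) ∧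
          (∀ E ∈ Set.Ioc (MSEuw - δ) MSEuw,
            (Pf E, μf E, wf E) ∈ U ∧ Fmap m n B Q E (Pf E) (μf E) (wf E) = 0) ∧
          Pf MSEuw = Pstar ∧ μf MSEuw = 0 ∧ wf MSEuw = (fun _ => 1 / (m : ℝ)) ∧
          (∀ E ∈ Set.Ioc (MSEuw - δ) MSEuw,
            ∀ p : (Fin n → ℝ) × ℝ × (Fin m → ℝ), p ∈ U →
              Fmap m n B Q E p.1 p.2.1 p.2.2 = 0 → p = (Pf E, μf E, wf E)) := by
  set f := fun q : ℝ × MaxEnt.Unknowns m n => Fmap m n B Q q.1 q.2.1 q.2.2.1 q.2.2.2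
  set u : ℝ × MaxEnt.Unknowns m n := (MSEuw, Pstar, 0, fun _ => 1 / (m : ℝ))
  have hnormal : Bᵀ *ᵥ rstar = 0 := hr ▸ hP ▸ transpose_mulVec_leastSquares_residual B hB Q
  have hfu : f u = 0 := by
    have := MaxEnt.Fmap_eq_zero_of_transpose_mulVec_eq_zero B Q hm.ne' (hr ▸ hnormal)
    rwa [← hr, ← hM] at this
  have cdf : ContDiffAt ℝ 1 f u := (MaxEnt.contDiff_Fmap B Q hm.ne').contDiffAt
  have if₂ : (fderiv ℝ f u ∘L .inr ℝ ℝ (MaxEnt.Unknowns m n)).IsInvertible := by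
    rw [cdf.differentiableAt one_ne_zero |>.fderiv_comp_inr
      (hr ▸ MaxEnt.hasFDerivAt_Fmap_of_mu_eq_zero B Q hm.ne' MSEuw Pstar _)]
    refine ContinuousLinearMap.isInvertible_of_injective
      (MaxEnt.jacobianAtZero_injective B hm.ne' hB hnormal ?_)
    exact sub_ne_zero.mpr (hM ▸ mean_mul_sum_sq_lt_sum_pow_four hres).ne
  obtain ⟨V, hV, U, hU, hψ⟩ := cdf.exists_mem_nhds_implicitFunction one_ne_zero (by simp) if₂
  set ψ := cdf.implicitFunction one_ne_zero if₂
  obtain ⟨δ, hδ, hball⟩ := Metric.mem_nhds_iff.mp hV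
  have hIoc : Set.Ioc (MSEuw - δ) MSEuw ⊆ V := fun E hE =>
    hball (by rw [Real.ball_eq_Ioo]; exact Set.Ioc_subset_Ioo_right (by linarith) hE)
  have hψu : ψ MSEuw = (Pstar, 0, fun _ => 1 / (m : ℝ)) := cdf.implicitFunction_apply_self _ _
  refine ⟨δ, hδ, U, hU, fun E => (ψ E).1, fun E => (ψ E).2.1, fun E => (ψ E).2.2,
    fun E hE => (hψ E (hIoc hE)).1.contDiffWithinAt,
    fun E hE => ⟨(hψ E (hIoc hE)).2.1, (hψ E (hIoc hE)).2.2.1.trans hfu⟩,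
    congrArg (·.1) hψu, congrArg (·.2.1) hψu, congrArg (·.2.2) hψu,
    fun E hE p hp hfp => (hψ E (hIoc hE)).2.2.2 p hp (hfp.trans hfu.symm)⟩

/-- Local existence, uniqueness and smooth dependence on the
parameter `E = MSE` of the solution of the maximum-entropy system near the
ordinary least-squares point `(P*, 0, (1/m,…,1/m))`, for `E` in a left
neighborhood `(MSEuw − δ, MSEuw]` of `MSEuw`. -/
theorem stmt_0 (m n : ℕ) (hm : 0 < m) (hn : 0 < n)
    (B : Matrix (Fin m) (Fin n) ℝ) (Q : Fin m → ℝ)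
    (hB : IsUnit (Bᵀ * B).det)
    (Pstar : Fin n → ℝ) (hP : Pstar = ((Bᵀ * B)⁻¹ * Bᵀ).mulVec Q)
    (rstar : Fin m → ℝ) (hr : rstar = B.mulVec Pstar - Q)
    (MSEuw : ℝ) (hM : MSEuw = (1 / (m : ℝ)) * ∑ i : Fin m, (rstar i) ^ 2)
    (hres : ¬ ∀ i j : Fin m, |rstar i| = |rstar j|) :
    ∃ δ > (0 : ℝ),
      ∃ U ∈ nhds ((Pstar, 0, fun _ => 1 / (m : ℝ)) :
          (Fin n → ℝ) × ℝ × (Fin m → ℝ)),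
        ∃ (Pf : ℝ → Fin n → ℝ) (μf : ℝ → ℝ) (wf : ℝ → Fin m → ℝ),
          ContDiffOn ℝ 1 (fun E => (Pf E, μf E, wf E)) (Set.Ioc (MSEuw - δ) MSEuw) ∧
          (∀ E ∈ Set.Ioc (MSEuw - δ) MSEuw,
            (Pf E, μf E, wf E) ∈ U ∧ Fmap m n B Q E (Pf E) (μf E) (wf E) = 0) ∧
          Pf MSEuw = Pstar ∧ μf MSEuw = 0 ∧ wf MSEuw = (fun _ => 1 / (m : ℝ)) ∧
          (∀ E ∈ Set.Ioc (MSEuw - δ) MSEuw,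
            ∀ p : (Fin n → ℝ) × ℝ × (Fin m → ℝ), p ∈ U →
              Fmap m n B Q E p.1 p.2.1 p.2.2 = 0 → p = (Pf E, μf E, wf E)) :=
  stmt_0_general m n hm B Q hB Pstar hP rstar hr MSEuw hM hres
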